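/- Let X and Y be uniformly discrete metric spaces of bounded geometry and f : X → Y a quasi-isometry. Then f is at bounded distance from a bijection X → Y if and only if there exist constants C, r such that for every finite subset S ⊆ Y, | |f⁻¹(S)| − |S| | ≤ C·|∂_r(S)|. -/

import Mathlib

open scoped ENNReal

/-- The closed `r`-neighborhood of a set `A`. -/
def nbhd {Z : Type*} [MetricSpace Z] (r : ℝ) (A : Set Z) : Set Z :=
  {z | ∃ a ∈ A, dist z a ≤ r}

/-- The `r`-boundary of `A`: points outside `A` within distance `r` of `A`. -/
def bdry {Z : Type*} [MetricSpace Z] (r : ℝ) (A : Set Z) : Set Z :=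
  nbhd r A \ A

/-- Uniformly discrete metric space. -/
def UniformlyDiscrete (Z : Type*) [MetricSpace Z] : Prop :=
  ∃ r > (0 : ℝ), ∀ x y : Z, dist x y < r → x = y

/-- Bounded geometry: balls of radius `r` have at most `N_r` points. -/
def BoundedGeometry (Z : Type*) [MetricSpace Z] : Prop :=
  ∀ r : ℝ, ∃ N : ℕ, ∀ x : Z, {y : Z | dist y x ≤ r}.Finite ∧
    {y : Z | dist y x ≤ r}.ncard ≤ N

/-- Coarse Lipschitz map. -/
def CoarseLipschitz {X Y : Type*} [MetricSpace X] [MetricSpace Y] (f : X → Y) : Prop :=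
  ∃ K L : ℝ, ∀ x₁ x₂ : X, dist (f x₁) (f x₂) ≤ K * dist x₁ x₂ + L


/-!
If `h` is a bijection within distance `r` of `f`, then `h⁻¹(S)` has `|S|` points and differs from
`f⁻¹(S)` only in points that `h` or `f` sends into `∂_r S`; since the fibres of `f` are uniformly
bounded, this gives the estimate.

Conversely, by Hall's marriage theorem (for families of finite sets) applied on both sides and
Schröder–Bernstein, a bijection within distance `R` of `f` exists as soon as
`|S| ≤ |f⁻¹(N_R S)|` and `|f⁻¹ S| ≤ |N_R S|` for all finite `S ⊆ Y`. To get these from the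
estimate, look at the iterated `w`-neighbourhoods `T_j` of `S`. Coarse surjectivity of `f`, with
`w`-balls of at most `P` points, makes `|∂T_{3a+1}|` at most `P` times the preimage mass in
`T_{3a+3} \ T_{3a}`, so the total size of these boundaries is bounded by the preimage mass gained
from `T_0` to `T_{3a₀}`. If one of the Hall inequalities failed, the estimate would force each of
these boundaries to be large compared with that gain, which is impossible once `a₀ > C²P`.
-/

open Set Function

section Neighborhoods

variable {Z : Type*} [MetricSpace Z] {r s : ℝ} {A B : Set Z}

lemma BoundedGeometry.finite_ball (h : BoundedGeometry Z) (r : ℝ) (z : Z) :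
    {y : Z | dist y z ≤ r}.Finite :=
  ((h r).choose_spec z).1

lemma subset_nbhd (hr : 0 ≤ r) : A ⊆ nbhd r A :=
  fun z hz => ⟨z, hz, by simpa using hr⟩

lemma nbhd_mono (hrs : r ≤ s) : nbhd r A ⊆ nbhd s A :=
  fun _ ⟨a, ha, hd⟩ => ⟨a, ha, hd.trans hrs⟩

lemma nbhd_nbhd_subset : nbhd r (nbhd s A) ⊆ nbhd (r + s) A := by
  rintro z ⟨b, ⟨a, ha, hba⟩, hzb⟩
  exact ⟨a, ha, (dist_triangle z b a).trans (add_le_add hzb hba)⟩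

lemma finite_nbhd (hball : ∀ z : Z, {y | dist y z ≤ r}.Finite) (hA : A.Finite) :
    (nbhd r A).Finite :=
  (hA.biUnion fun a _ => hball a).subset fun _ ⟨_, ha, hd⟩ => mem_biUnion ha hd

lemma finite_iterate_nbhd (hball : ∀ z : Z, {y | dist y z ≤ r}.Finite) (hA : A.Finite) :
    ∀ j, ((nbhd r)^[j] A).Finite
  | 0 => hA
  | j + 1 => by rw [iterate_succ_apply']; exact finite_nbhd hball (finite_iterate_nbhd hball hA j)

lemma monotone_iterate_nbhd (hr : 0 ≤ r) : Monotone fun j => (nbhd r)^[j] A :=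
  monotone_nat_of_le_succ fun j => by
    simp only [iterate_succ_apply']
    exact subset_nbhd hr

lemma iterate_nbhd_subset_nbhd (hr : 0 ≤ r) : ∀ k : ℕ, (nbhd r)^[k] A ⊆ nbhd (k * r) A
  | 0 => by simpa using subset_nbhd le_rfl
  | k + 1 => by
    rw [iterate_succ_apply']
    rintro z ⟨b, hb, hzb⟩
    exact nbhd_mono (by push_cast; linarith)
      (nbhd_nbhd_subset ⟨b, iterate_nbhd_subset_nbhd hr k hb, hzb⟩)

lemma ncard_iterate_nbhd_succ (hr : 0 ≤ r) (hball : ∀ z : Z, {y | dist y z ≤ r}.Finite)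
    (hA : A.Finite) (j : ℕ) :
    ((nbhd r)^[j + 1] A).ncard = ((nbhd r)^[j] A).ncard + (bdry r ((nbhd r)^[j] A)).ncard := by
  rw [bdry, ← iterate_succ_apply' (nbhd r), add_comm ((nbhd r)^[j] A).ncard]
  exact (ncard_sdiff_add_ncard_of_subset (monotone_iterate_nbhd hr j.le_succ)
    (finite_iterate_nbhd hball hA _)).symm

end Neighborhoods

section CoarseInverse

variable {α β : Type*} [MetricSpace α] {φ : α → β} {ψ : β → α} {c : ℝ}

lemma finite_preimage_of_dist_le (hψ : ∀ a, dist (ψ (φ a)) a ≤ c)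
    (hball : ∀ a : α, {a' | dist a' a ≤ c}.Finite) {B : Set β} (hB : B.Finite) :
    (φ ⁻¹' B).Finite :=
  hB.preimage' fun b _ => (hball (ψ b)).subset fun a (ha : φ a = b) => by
    rw [← ha]; exact (dist_comm _ _).trans_le (hψ a)

lemma ncard_le_mul_ncard_image_of_dist_le (hψ : ∀ a, dist (ψ (φ a)) a ≤ c) {N : ℕ}
    (hN : ∀ a : α, {a' | dist a' a ≤ c}.Finite ∧ {a' | dist a' a ≤ c}.ncard ≤ N)
    {A : Set α} (hA : A.Finite) : A.ncard ≤ N * (φ '' A).ncard := by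
  classical
  have himage : φ '' A = ↑(hA.toFinset.image φ) := by simp
  rw [ncard_eq_toFinset_card A hA, himage, ncard_coe_finset]
  refine Finset.card_le_mul_card_image _ N fun b _ => ?_
  rw [← ncard_coe_finset]
  refine (ncard_le_ncard (fun a ha => ?_) (hN (ψ b)).1).trans (hN (ψ b)).2
  obtain ⟨-, rfl⟩ : a ∈ A ∧ φ a = b := by simpa using ha
  exact (dist_comm _ _).trans_le (hψ a)

end CoarseInverse

lemma exists_injective_of_card_le_ncard {ι α : Type*} (r : ι → α → Prop)
    (hfin : ∀ i, {a | r i a}.Finite) (h : ∀ s : Finset ι, s.card ≤ {a | ∃ i ∈ s, r i a}.ncard) :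
    ∃ F : ι → α, Injective F ∧ ∀ i, r i (F i) := by
  classical
  obtain ⟨F, hF, hFr⟩ := (Finset.all_card_le_biUnion_card_iff_exists_injective
    fun i => (hfin i).toFinset).1 fun s => (h s).trans_eq <| by
      rw [← ncard_coe_finset]; congr 1; ext; simp
  exact ⟨F, hF, fun i => by simpa using hFr i⟩

lemma exists_bijective_dist_le_of_hall {X Y : Type*} [MetricSpace Y] {f : X → Y} {R : ℝ}
    (hpre : ∀ y, {x | dist (f x) y ≤ R}.Finite) (hball : ∀ y : Y, {y' | dist y' y ≤ R}.Finite)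
    (hY : ∀ S : Finset Y, S.card ≤ (f ⁻¹' nbhd R S).ncard)
    (hX : ∀ s : Finset X, s.card ≤ (nbhd R (f '' s)).ncard) :
    ∃ h : X → Y, Bijective h ∧ ∀ x, dist (h x) (f x) ≤ R := by
  obtain ⟨u, hu, hfu⟩ := exists_injective_of_card_le_ncard (fun y x => dist (f x) y ≤ R) hpre hY
  obtain ⟨v, hv, hvf⟩ := exists_injective_of_card_le_ncard (fun x y => dist y (f x) ≤ R)
    (fun x => hball (f x)) fun s => (hX s).trans_eq <|
      congrArg ncard <| Set.ext fun y => by simp [nbhd]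
  exact Embedding.schroeder_bernstein_of_rel hv hu (fun x y => dist y (f x) ≤ R) hvf
    fun y => (dist_comm _ _).trans_le (hfu y)

section ShellCounting

/-! Here `t j`, `m j`, `A j` stand for `|T_j|`, `|f⁻¹ T_j|` and `|∂_w T_j|`, where `T_j` is the
`j`-th iterated `w`-neighbourhood of a finite set. -/

variable {t m A : ℕ → ℕ} {C P a₀ : ℕ}

lemma mul_le_of_shells (hm : Monotone m) (hA : ∀ a, A (3 * a + 1) ≤ P * (m (3 * a + 3) - m (3 * a)))
    {c D : ℕ} (hc : ∀ a < a₀, c ≤ D * A (3 * a + 1)) :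
    a₀ * c ≤ D * P * (m (3 * a₀) - m 0) :=
  calc a₀ * c = ∑ _a ∈ Finset.range a₀, c := by simp
    _ ≤ ∑ a ∈ Finset.range a₀, D * (P * (m (3 * (a + 1)) - m (3 * a))) :=
      Finset.sum_le_sum fun a ha =>
        (hc a (Finset.mem_range.1 ha)).trans (Nat.mul_le_mul_left D (hA a))
    _ = D * P * (m (3 * a₀) - m 0) := by
      rw [← Finset.mul_sum, ← Finset.mul_sum,
        Finset.sum_range_tsub (f := fun a => m (3 * a)) (hm.comp fun _ _ h => by omega), mul_assoc]

lemma le_mass_of_shells (ht : ∀ j, t (j + 1) = t j + A j) (hm : Monotone m)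
    (hest : ∀ j, t j ≤ m j + C * A j)
    (hA : ∀ a, A (3 * a + 1) ≤ P * (m (3 * a + 3) - m (3 * a))) (ha₀ : C ^ 2 * P < a₀) :
    t 0 ≤ m (3 * a₀) := by
  by_contra! hlt
  have htmono : Monotone t := monotone_nat_of_le_succ fun j => by rw [ht j]; omega
  have hband : ∀ a < a₀, t 0 - m 0 ≤ C ^ 2 * A (3 * a + 1) := by
    intro a ha
    have hA₀ : A 0 < C * A (3 * a + 1) := by
      have := hest (3 * a + 1)
      have : t 0 + A 0 ≤ t (3 * a + 1) := (ht 0).symm.trans_le (htmono (by omega))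
      have : m (3 * a + 1) ≤ m (3 * a₀) := hm (by omega)
      omega
    calc t 0 - m 0 ≤ C * A 0 := by have := hest 0; omega
      _ ≤ C * (C * A (3 * a + 1)) := Nat.mul_le_mul_left C hA₀.le
      _ = C ^ 2 * A (3 * a + 1) := by ring
  have hδ : m (3 * a₀) - m 0 < t 0 - m 0 := by
    have := hm (Nat.zero_le (3 * a₀))
    omega
  have hsum := mul_le_of_shells hm hA hband
  have : C ^ 2 * P * (m (3 * a₀) - m 0) < a₀ * (t 0 - m 0) :=
    calc C ^ 2 * P * (m (3 * a₀) - m 0) ≤ C ^ 2 * P * (t 0 - m 0) :=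
          Nat.mul_le_mul_left _ hδ.le
      _ < a₀ * (t 0 - m 0) := Nat.mul_lt_mul_of_pos_right ha₀ (by omega)
  omega

lemma mass_le_of_shells (ht : ∀ j, t (j + 1) = t j + A j) (hm : Monotone m)
    (hest : ∀ j, m j ≤ t j + C * A j)
    (hA : ∀ a, A (3 * a + 1) ≤ P * (m (3 * a + 3) - m (3 * a))) (ha₀ : C ^ 2 * P < a₀) :
    m 0 ≤ t (3 * a₀ + 1) := by
  by_contra! hlt
  rw [ht] at hlt
  have htmono : Monotone t := monotone_nat_of_le_succ fun j => by rw [ht j]; omega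
  have hband : ∀ a < a₀, A (3 * a₀) + 1 ≤ C * A (3 * a + 1) := by
    intro a ha
    have := hest (3 * a + 1)
    have : m 0 ≤ m (3 * a + 1) := hm (by omega)
    have : t (3 * a + 1) ≤ t (3 * a₀) := htmono (by omega)
    omega
  have hmass : m (3 * a₀) - m 0 ≤ C * A (3 * a₀) := by
    have := hest (3 * a₀)
    omega
  have hsum := mul_le_of_shells hm hA hband
  have : C * P * (m (3 * a₀) - m 0) < a₀ * (A (3 * a₀) + 1) :=
    calc C * P * (m (3 * a₀) - m 0) ≤ C * P * (C * A (3 * a₀)) := Nat.mul_le_mul_left _ hmass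
      _ = C ^ 2 * P * A (3 * a₀) := by ring
      _ ≤ C ^ 2 * P * (A (3 * a₀) + 1) := Nat.mul_le_mul_left _ (Nat.le_succ _)
      _ < a₀ * (A (3 * a₀) + 1) := Nat.mul_lt_mul_of_pos_right ha₀ (Nat.succ_pos _)
  omega

end ShellCounting

lemma mapsTo_sdiff_preimage_bdry {X Y : Type*} [MetricSpace Y] {φ ψ : X → Y} {r : ℝ} {S : Set Y}
    (hφψ : ∀ x, dist (φ x) (ψ x) ≤ r) : MapsTo φ (ψ ⁻¹' S \ φ ⁻¹' S) (bdry r S) :=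
  fun x ⟨hψx, hφx⟩ => ⟨⟨ψ x, hψx, hφψ x⟩, hφx⟩

def BoundaryEstimate {X Y : Type*} [MetricSpace Y] (f : X → Y) (C r : ℝ) : Prop :=
  ∀ S : Set Y, S.Finite → |((f ⁻¹' S).ncard : ℝ) - (S.ncard : ℝ)| ≤ C * ((bdry r S).ncard : ℝ)

namespace BoundaryEstimate

variable {X Y : Type*} [MetricSpace Y] {f : X → Y} {C C' r r' : ℝ} {S : Set Y}

lemma mono (h : BoundaryEstimate f C r) (hC : C ≤ C') (hC' : 0 ≤ C') (hr : r ≤ r')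
    (hball : ∀ y : Y, {y' | dist y' y ≤ r'}.Finite) : BoundaryEstimate f C' r' := by
  intro S hS
  have hbdry : (bdry r S).ncard ≤ (bdry r' S).ncard :=
    ncard_le_ncard (sdiff_subset_sdiff_left (nbhd_mono hr)) ((finite_nbhd hball hS).sdiff)
  calc _ ≤ C * (bdry r S).ncard := h S hS
    _ ≤ C' * (bdry r S).ncard := by gcongr
    _ ≤ C' * (bdry r' S).ncard := by gcongr

lemma ncard_le {C : ℕ} (h : BoundaryEstimate f C r) (hS : S.Finite) :
    S.ncard ≤ (f ⁻¹' S).ncard + C * (bdry r S).ncard := by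
  have := (abs_sub_le_iff.1 (h S hS)).2
  exact_mod_cast (by linarith : (S.ncard : ℝ) ≤ (f ⁻¹' S).ncard + C * (bdry r S).ncard)

lemma ncard_preimage_le {C : ℕ} (h : BoundaryEstimate f C r) (hS : S.Finite) :
    (f ⁻¹' S).ncard ≤ S.ncard + C * (bdry r S).ncard := by
  have := (abs_sub_le_iff.1 (h S hS)).1
  exact_mod_cast (by linarith : ((f ⁻¹' S).ncard : ℝ) ≤ S.ncard + C * (bdry r S).ncard)

lemma of_bijective [MetricSpace X] {g : Y → X} {c₀ : ℝ} {M : ℕ}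
    (hgf : ∀ x, dist (g (f x)) x ≤ c₀)
    (hM : ∀ x : X, {x' | dist x' x ≤ c₀}.Finite ∧ {x' | dist x' x ≤ c₀}.ncard ≤ M)
    (hball : ∀ y : Y, {y' | dist y' y ≤ r}.Finite) {h : X → Y} (hh : Bijective h)
    (hhf : ∀ x, dist (h x) (f x) ≤ r) : BoundaryEstimate f (M + 1) r := by
  intro S hS
  have hpre : (f ⁻¹' S).Finite := finite_preimage_of_dist_le hgf (fun x => (hM x).1) hS
  have hbdry : (bdry r S).Finite := (finite_nbhd hball hS).sdiff
  have hhS : (h ⁻¹' S).ncard = S.ncard :=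
    ncard_preimage_of_injective_subset_range hh.1 (by simp [hh.2.range_eq])
  have hfh : ((f ⁻¹' S) \ (h ⁻¹' S)).ncard ≤ (bdry r S).ncard :=
    ncard_le_ncard_of_injOn h (mapsTo_sdiff_preimage_bdry hhf) hh.1.injOn hbdry
  have hhf' : ((h ⁻¹' S) \ (f ⁻¹' S)).ncard ≤ M * (bdry r S).ncard :=
    (ncard_le_mul_ncard_image_of_dist_le hgf hM (hS.preimage hh.1.injOn).sdiff).trans <|
      Nat.mul_le_mul_left M <| ncard_le_ncard
        (mapsTo_sdiff_preimage_bdry fun x => (dist_comm _ _).trans_le (hhf x)).image_subset hbdry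
  have h₁ := ncard_le_ncard_sdiff_add_ncard (f ⁻¹' S) (h ⁻¹' S) (hS.preimage hh.1.injOn)
  have h₂ := ncard_le_ncard_sdiff_add_ncard (h ⁻¹' S) (f ⁻¹' S) hpre
  have hup : (f ⁻¹' S).ncard ≤ S.ncard + (M * (bdry r S).ncard + (bdry r S).ncard) := by omega
  have hdown : S.ncard ≤ (f ⁻¹' S).ncard + (M * (bdry r S).ncard + (bdry r S).ncard) := by omega
  rw [abs_sub_le_iff, add_mul, one_mul]
  constructor
  · have : ((f ⁻¹' S).ncard : ℝ) ≤ S.ncard + (M * (bdry r S).ncard + (bdry r S).ncard) := by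
      exact_mod_cast hup
    linarith
  · have : (S.ncard : ℝ) ≤ (f ⁻¹' S).ncard + (M * (bdry r S).ncard + (bdry r S).ncard) := by
      exact_mod_cast hdown
    linarith

end BoundaryEstimate

section HallConditions

variable {X Y : Type*} [MetricSpace Y] {f : X → Y} {g : Y → X} {w : ℝ} {P : ℕ}

/-- `g` maps `∂_w A` into `f⁻¹(N_w N_w A \ B)`, and its fibres lie in `w`-balls. -/
lemma ncard_bdry_le_mul_ncard_preimage_sdiff (hbg : BoundedGeometry Y) (hw : 0 ≤ w)
    (hfg : ∀ y, dist (f (g y)) y ≤ w) (hP : ∀ y : Y, {y' | dist y' y ≤ w}.ncard ≤ P)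
    (hpre : ∀ A : Set Y, A.Finite → (f ⁻¹' A).Finite) {A B : Set Y} (hA : A.Finite)
    (hBA : nbhd w B ⊆ A) :
    (bdry w A).ncard ≤ P * ((f ⁻¹' nbhd w (nbhd w A)).ncard - (f ⁻¹' B).ncard) := by
  have hball := hbg.finite_ball w
  have hNNA : (nbhd w (nbhd w A)).Finite := finite_nbhd hball (finite_nbhd hball hA)
  have hB : B ⊆ nbhd w (nbhd w A) :=
    (subset_nbhd hw).trans <| hBA.trans <| (subset_nbhd hw).trans (subset_nbhd hw)
  have hmaps : MapsTo g (bdry w A) (f ⁻¹' nbhd w (nbhd w A) \ f ⁻¹' B) :=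
    fun y ⟨hy, hyA⟩ => ⟨⟨y, hy, hfg y⟩,
      fun hgy => hyA (hBA ⟨f (g y), hgy, (dist_comm _ _).trans_le (hfg y)⟩)⟩
  calc (bdry w A).ncard ≤ P * (g '' bdry w A).ncard :=
        ncard_le_mul_ncard_image_of_dist_le hfg (fun y => ⟨hball y, hP y⟩)
          (finite_nbhd hball hA).sdiff
    _ ≤ P * (f ⁻¹' nbhd w (nbhd w A) \ f ⁻¹' B).ncard :=
        Nat.mul_le_mul_left P (ncard_le_ncard hmaps.image_subset (hpre _ hNNA).sdiff)
    _ = _ := by rw [ncard_sdiff' (preimage_mono hB) (hpre _ hNNA)]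

lemma ncard_bdry_iterate_nbhd_le (hbg : BoundedGeometry Y) (hw : 0 ≤ w)
    (hfg : ∀ y, dist (f (g y)) y ≤ w) (hP : ∀ y : Y, {y' | dist y' y ≤ w}.ncard ≤ P)
    (hpre : ∀ A : Set Y, A.Finite → (f ⁻¹' A).Finite) {S : Set Y} (hS : S.Finite) (i : ℕ) :
    (bdry w ((nbhd w)^[i + 1] S)).ncard ≤
      P * ((f ⁻¹' (nbhd w)^[i + 3] S).ncard - (f ⁻¹' (nbhd w)^[i] S).ncard) := by
  have := ncard_bdry_le_mul_ncard_preimage_sdiff hbg hw hfg hP hpre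
    (finite_iterate_nbhd (hbg.finite_ball w) hS (i + 1)) (B := (nbhd w)^[i] S)
    (iterate_succ_apply' _ _ _).ge
  simpa only [← iterate_succ_apply' (nbhd w)] using this

lemma monotone_ncard_preimage_iterate_nbhd (hbg : BoundedGeometry Y) (hw : 0 ≤ w)
    (hpre : ∀ A : Set Y, A.Finite → (f ⁻¹' A).Finite) {S : Set Y} (hS : S.Finite) :
    Monotone fun j => (f ⁻¹' (nbhd w)^[j] S).ncard := fun _ j hij =>
  ncard_le_ncard (preimage_mono (monotone_iterate_nbhd hw hij))
    (hpre _ (finite_iterate_nbhd (hbg.finite_ball w) hS j))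

lemma ncard_le_ncard_preimage_nbhd (hbg : BoundedGeometry Y) (hw : 0 ≤ w)
    (hfg : ∀ y, dist (f (g y)) y ≤ w) (hP : ∀ y : Y, {y' | dist y' y ≤ w}.ncard ≤ P)
    (hpre : ∀ A : Set Y, A.Finite → (f ⁻¹' A).Finite) {C a₀ : ℕ}
    (hest : BoundaryEstimate f C w) (ha₀ : C ^ 2 * P < a₀) {S : Set Y} (hS : S.Finite) :
    S.ncard ≤ (f ⁻¹' nbhd ((3 * a₀ + 1 : ℕ) * w) S).ncard := by
  have hball := hbg.finite_ball w
  have hmono := monotone_ncard_preimage_iterate_nbhd hbg hw hpre hS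
  calc S.ncard ≤ (f ⁻¹' (nbhd w)^[3 * a₀] S).ncard :=
        le_mass_of_shells (ncard_iterate_nbhd_succ hw hball hS) hmono
          (fun j => hest.ncard_le (finite_iterate_nbhd hball hS j))
          (fun a => ncard_bdry_iterate_nbhd_le hbg hw hfg hP hpre hS (3 * a)) ha₀
    _ ≤ (f ⁻¹' (nbhd w)^[3 * a₀ + 1] S).ncard := hmono (Nat.le_succ _)
    _ ≤ _ := ncard_le_ncard (preimage_mono (iterate_nbhd_subset_nbhd hw _))
        (hpre _ (finite_nbhd (hbg.finite_ball _) hS))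

lemma ncard_preimage_le_ncard_nbhd (hbg : BoundedGeometry Y) (hw : 0 ≤ w)
    (hfg : ∀ y, dist (f (g y)) y ≤ w) (hP : ∀ y : Y, {y' | dist y' y ≤ w}.ncard ≤ P)
    (hpre : ∀ A : Set Y, A.Finite → (f ⁻¹' A).Finite) {C a₀ : ℕ}
    (hest : BoundaryEstimate f C w) (ha₀ : C ^ 2 * P < a₀) {S : Set Y} (hS : S.Finite) :
    (f ⁻¹' S).ncard ≤ (nbhd ((3 * a₀ + 1 : ℕ) * w) S).ncard := by
  have hball := hbg.finite_ball w
  calc (f ⁻¹' S).ncard ≤ ((nbhd w)^[3 * a₀ + 1] S).ncard :=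
        mass_le_of_shells (ncard_iterate_nbhd_succ hw hball hS)
          (monotone_ncard_preimage_iterate_nbhd hbg hw hpre hS)
          (fun j => hest.ncard_preimage_le (finite_iterate_nbhd hball hS j))
          (fun a => ncard_bdry_iterate_nbhd_le hbg hw hfg hP hpre hS (3 * a)) ha₀
    _ ≤ _ := ncard_le_ncard (iterate_nbhd_subset_nbhd hw _) (finite_nbhd (hbg.finite_ball _) hS)

lemma exists_bijective_dist_le_of_boundaryEstimate (hbg : BoundedGeometry Y) (hw : 0 ≤ w)
    (hfg : ∀ y, dist (f (g y)) y ≤ w) (hpre : ∀ A : Set Y, A.Finite → (f ⁻¹' A).Finite)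
    {C r : ℝ} (hrw : r ≤ w) (hest : BoundaryEstimate f C r) :
    ∃ h : X → Y, Bijective h ∧ ∃ R : ℝ, ∀ x, dist (h x) (f x) ≤ R := by
  obtain ⟨P, hP⟩ := hbg w
  have hest' : BoundaryEstimate f ⌈C⌉₊ w :=
    hest.mono (Nat.le_ceil C) (Nat.cast_nonneg _) hrw (hbg.finite_ball w)
  have ha₀ : ⌈C⌉₊ ^ 2 * P < ⌈C⌉₊ ^ 2 * P + 1 := Nat.lt_succ_self _
  obtain ⟨h, hh, hhf⟩ := exists_bijective_dist_le_of_hall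
    (R := ((3 * (⌈C⌉₊ ^ 2 * P + 1) + 1 : ℕ) : ℝ) * w)
    (fun y => hpre _ (hbg.finite_ball _ y)) (hbg.finite_ball _)
    (fun S => by
      rw [← ncard_coe_finset]
      exact ncard_le_ncard_preimage_nbhd hbg hw hfg (fun y => (hP y).2) hpre hest' ha₀
        S.finite_toSet)
    (fun s => calc s.card = (s : Set X).ncard := (ncard_coe_finset s).symm
      _ ≤ (f ⁻¹' (f '' s)).ncard :=
        ncard_le_ncard (subset_preimage_image f _) (hpre _ (s.finite_toSet.image f))
      _ ≤ _ := ncard_preimage_le_ncard_nbhd hbg hw hfg (fun y => (hP y).2) hpre hest' ha₀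
        (s.finite_toSet.image f))
  exact ⟨h, hh, _, hhf⟩

end HallConditions

theorem stmt8_general {X Y : Type*} [MetricSpace X] [MetricSpace Y]
    (hbgX : BoundedGeometry X) (hbgY : BoundedGeometry Y)
    (f : X → Y) (g : Y → X)
    (hgf : ∃ C : ℝ, ∀ x : X, dist (g (f x)) x ≤ C)
    (hfg : ∃ C : ℝ, ∀ y : Y, dist (f (g y)) y ≤ C) :
    (∃ h : X → Y, Function.Bijective h ∧ ∃ C : ℝ, ∀ x, dist (h x) (f x) ≤ C) ↔
      ∃ C r : ℝ, 0 < r ∧ ∀ S : Set Y, S.Finite →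
        |((f ⁻¹' S).ncard : ℝ) - (S.ncard : ℝ)| ≤ C * ((bdry r S).ncard : ℝ) := by
  obtain ⟨c₀, hc₀⟩ := hgf
  obtain ⟨M, hM⟩ := hbgX c₀
  have hpre : ∀ A : Set Y, A.Finite → (f ⁻¹' A).Finite :=
    fun _ => finite_preimage_of_dist_le hc₀ fun x => (hM x).1
  constructor
  · rintro ⟨h, hh, c, hc⟩
    exact ⟨M + 1, max c 1, by positivity, BoundaryEstimate.of_bijective hc₀ hM
      (hbgY.finite_ball _) hh fun x => (hc x).trans (le_max_left _ _)⟩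
  · rintro ⟨C, r, hr, hest⟩
    obtain ⟨c₁, hc₁⟩ := hfg
    exact exists_bijective_dist_le_of_boundaryEstimate hbgY (hr.le.trans (le_max_left r c₁))
      (fun y => (hc₁ y).trans (le_max_right _ _)) hpre (le_max_left r c₁) hest

/-- A quasi-isometry `f : X → Y` between uniformly discrete bounded-geometry
spaces is at bounded distance from a bijection iff there are constants `C`, `r`
with `||f⁻¹(S)| − |S|| ≤ C·|∂_r(S)|` for every finite `S ⊆ Y`. -/
theorem stmt8 {X Y : Type*} [MetricSpace X] [MetricSpace Y]
    (hudX : UniformlyDiscrete X) (hbgX : BoundedGeometry X)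
    (hudY : UniformlyDiscrete Y) (hbgY : BoundedGeometry Y)
    (f : X → Y) (g : Y → X) (hf : CoarseLipschitz f) (hg : CoarseLipschitz g)
    (hgf : ∃ C : ℝ, ∀ x : X, dist (g (f x)) x ≤ C)
    (hfg : ∃ C : ℝ, ∀ y : Y, dist (f (g y)) y ≤ C) :
    (∃ h : X → Y, Function.Bijective h ∧ ∃ C : ℝ, ∀ x, dist (h x) (f x) ≤ C) ↔
      ∃ C r : ℝ, 0 < r ∧ ∀ S : Set Y, S.Finite →
        |((f ⁻¹' S).ncard : ℝ) - (S.ncard : ℝ)| ≤ C * ((bdry r S).ncard : ℝ) :=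
  stmt8_general hbgX hbgY f g hgf hfg
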